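/- arXiv:2006.03739 — 2 statements merged into one kernel-verified Lean document; each statement's English description precedes it below -/
import Mathlib

section
/- Let G be a disconnected finite simple graph and t ≥ 1. Then the root w is a cut-vertex of μ_t(G), and w is the only cut-vertex of μ_t(G). -/
open SimpleGraph

/-- The generalized Mycielskian `μ_t(G)`: levels `0,…,t` of copies of `V(G)`
plus a root `none`. Level-0 vertices are the original vertices. -/
def genMyc {V : Type*} (G : SimpleGraph V) (t : ℕ) :
    SimpleGraph (Option (Fin (t + 1) × V)) :=
  SimpleGraph.fromRel fun a b =>
    match a, b with
    | some (s, i), some (s', j) =>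
        ((s : ℕ) = 0 ∧ (s' : ℕ) = 0 ∧ G.Adj i j) ∨
        ((s' : ℕ) = (s : ℕ) + 1 ∧ G.Adj i j)
    | some (s, _), none => (s : ℕ) = t
    | _, _ => False

/-- The (traditional) Mycielskian `μ(G)`. -/
def myc {V : Type*} (G : SimpleGraph V) : SimpleGraph (Option (Fin 2 × V)) :=
  genMyc G 1

/-- The star `K_{1,m}` with center `0` and `m` leaves. -/
def starG (m : ℕ) : SimpleGraph (Fin (m + 1)) :=
  SimpleGraph.fromRel fun a _ => a = 0

/-- A `d`-coloring is distinguishing if only the trivial automorphism preserves it. -/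
def IsDistinguishing {V : Type*} (H : SimpleGraph V) (d : ℕ) (c : V → Fin d) : Prop :=
  ∀ φ : H ≃g H, (∀ v, c (φ v) = c v) → ∀ v, φ v = v

/-- The distinguishing number of a graph. -/
noncomputable def distNum {V : Type*} (H : SimpleGraph V) : ℕ :=
  sInf {d | ∃ c : V → Fin d, IsDistinguishing H d c}

/-- A vertex is a cut-vertex if deleting it increases the number of connected
components. -/
def IsCutVertex {W : Type*} (H : SimpleGraph W) (v : W) : Prop :=
  Nat.card H.ConnectedComponent <
    Nat.card ((H.induce {u | u ≠ v}).ConnectedComponent)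

section Aux
variable {V : Type*} {G : SimpleGraph V} {t : ℕ}

lemma genMyc_adj_some_some {s s' : Fin (t+1)} {a b : V}
    (h : (genMyc G t).Adj (some (s, a)) (some (s', b))) : G.Adj a b := by
  simp only [genMyc, fromRel_adj] at h
  rcases h with ⟨-, h | h⟩
  · rcases h with ⟨-, -, h⟩ | ⟨-, h⟩ <;> exact h
  · rcases h with ⟨-, -, h⟩ | ⟨-, h⟩ <;> exact h.symm

lemma genMyc_adj_some_none {s : Fin (t+1)} {a : V}
    (h : (genMyc G t).Adj (some (s, a)) none) : (s : ℕ) = t := by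
  simp only [genMyc, fromRel_adj] at h
  rcases h with ⟨-, h | h⟩
  · exact h
  · exact h.elim

lemma genMyc_adj_top (s : Fin (t+1)) (hs : (s : ℕ) = t) (a : V) :
    (genMyc G t).Adj (some (s, a)) none := by
  simp only [genMyc, fromRel_adj]
  exact ⟨by simp, Or.inl hs⟩

lemma genMyc_adj_zero {a b : V} (hab : G.Adj a b) (s s' : Fin (t+1))
    (h0 : (s : ℕ) = 0) (h0' : (s' : ℕ) = 0) :
    (genMyc G t).Adj (some (s, a)) (some (s', b)) := by
  simp only [genMyc, fromRel_adj]
  refine ⟨?_, Or.inl (Or.inl ⟨h0, h0', hab⟩)⟩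
  simp only [ne_eq, Option.some.injEq, Prod.mk.injEq, not_and]
  exact fun _ => hab.ne

lemma genMyc_adj_step {a b : V} (hab : G.Adj a b) (s s' : Fin (t+1))
    (hss : (s' : ℕ) = (s : ℕ) + 1) :
    (genMyc G t).Adj (some (s, a)) (some (s', b)) := by
  simp only [genMyc, fromRel_adj]
  refine ⟨?_, Or.inl (Or.inr ⟨hss, hab⟩)⟩
  simp only [ne_eq, Option.some.injEq, Prod.mk.injEq, not_and]
  intro hs
  exfalso
  rw [hs] at hss
  omega

lemma genMyc_climb (x : Option (Fin (t+1) × V)) (hx : none ≠ x) :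
    ∀ (n l : ℕ) (hln : l + n = t) (a b : V), G.Adj a b →
    ∀ (havoid : ∀ (m : ℕ) (_ : m ≤ n),
        (some (⟨l + m, by omega⟩, if m % 2 = 0 then a else b) : Option (Fin (t+1) × V)) ≠ x)
      (hstart : (some (⟨l, by omega⟩, a) : Option (Fin (t+1) × V)) ≠ x),
    ((genMyc G t).induce {u | u ≠ x}).Reachable ⟨some (⟨l, by omega⟩, a), hstart⟩ ⟨none, hx⟩ := by
  intro n
  induction n with
  | zero =>
    intro l hln a b hab havoid hstart
    apply Adj.reachable
    show (genMyc G t).Adj _ _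
    exact genMyc_adj_top ⟨l, by omega⟩ (by simp; omega) a
  | succ n ih =>
    intro l hln a b hab havoid hstart
    have h1 : (some (⟨l + 1, by omega⟩, b) : Option (Fin (t+1) × V)) ≠ x := by
      have := havoid 1 (by omega)
      simpa using this
    have hstep : ((genMyc G t).induce {u | u ≠ x}).Adj
        ⟨some (⟨l, by omega⟩, a), hstart⟩ ⟨some (⟨l + 1, by omega⟩, b), h1⟩ := by
      show (genMyc G t).Adj _ _
      exact genMyc_adj_step hab _ _ rfl
    refine hstep.reachable.trans ?_
    refine ih (l + 1) (by omega) b a hab.symm ?_ h1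
    intro m hm hc
    refine havoid (m + 1) (by omega) ?_
    have hval : ((⟨l + (m + 1), by omega⟩ : Fin (t+1))) = ⟨l + 1 + m, by omega⟩ := by
      apply Fin.ext; simp; omega
    have hif : (if (m + 1) % 2 = 0 then a else b) = (if m % 2 = 0 then b else a) := by
      rcases Nat.mod_two_eq_zero_or_one m with h | h
      · have h2 : (m + 1) % 2 = 1 := by omega
        simp [h, h2]
      · have h2 : (m + 1) % 2 = 0 := by omega
        simp [h, h2]
    rw [hval, hif]
    exact hc

lemma genMyc_desc (x : Option (Fin (t+1) × V)) :
    ∀ (l : ℕ) (hl : l ≤ t) (a b : V), G.Adj a b →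
    ∀ (hfree : ∀ (m : ℕ) (_ : m ≤ l) (v : V),
        (some (⟨m, by omega⟩, v) : Option (Fin (t+1) × V)) ≠ x),
    ((genMyc G t).induce {u | u ≠ x}).Reachable
        ⟨some (⟨l, by omega⟩, a), hfree l le_rfl a⟩ ⟨some (⟨0, by omega⟩, a), hfree 0 (by omega) a⟩ ∨
    ((genMyc G t).induce {u | u ≠ x}).Reachable
        ⟨some (⟨l, by omega⟩, a), hfree l le_rfl a⟩ ⟨some (⟨0, by omega⟩, b), hfree 0 (by omega) b⟩ := by
  intro l
  induction l with
  | zero => intro hl a b hab hfree; exact Or.inl (Reachable.refl _)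
  | succ l ih =>
    intro hl a b hab hfree
    have hstep : ((genMyc G t).induce {u | u ≠ x}).Adj
        ⟨some (⟨l + 1, by omega⟩, a), hfree (l+1) le_rfl a⟩
        ⟨some (⟨l, by omega⟩, b), hfree l (by omega) b⟩ := by
      show (genMyc G t).Adj _ _
      exact (genMyc_adj_step hab.symm _ _ rfl).symm
    have hfree' : ∀ (m : ℕ) (_ : m ≤ l) (v : V),
        (some (⟨m, by omega⟩, v) : Option (Fin (t+1) × V)) ≠ x :=
      fun m hm v => hfree m (by omega) v
    rcases ih (by omega) b a hab.symm hfree' with h | h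
    · exact Or.inr (hstep.reachable.trans h)
    · exact Or.inl (hstep.reachable.trans h)

lemma genMyc_reach_root (σ : Fin (t+1)) (i : V) (j k : V) (hjk : G.Adj j k)
    (l : ℕ) (hl : l ≤ t)
    (hne : (some (⟨l, by omega⟩, j) : Option (Fin (t+1) × V)) ≠ some (σ, i)) :
    ((genMyc G t).induce {u | u ≠ some (σ, i)}).Reachable
      ⟨some (⟨l, by omega⟩, j), hne⟩ ⟨none, by simp⟩ := by
  set x : Option (Fin (t+1) × V) := some (σ, i) with hxdef
  have hxnone : (none : Option (Fin (t+1) × V)) ≠ x := by simp [hxdef]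
  have hs : (σ : ℕ) ≤ t := by omega
  rcases le_or_gt (σ : ℕ) l with hsl | hls
  · -- climb directly
    refine genMyc_climb x hxnone (t - l) l (by omega) j k hjk ?_ hne
    intro m hm hc
    rw [hxdef, Option.some.injEq, Prod.mk.injEq] at hc
    have hval : l + m = (σ : ℕ) := by
      have := congrArg Fin.val hc.1
      simpa using this
    have hm0 : m = 0 ∧ l = (σ : ℕ) := by omega
    obtain ⟨rfl, hlσ⟩ := hm0
    simp only [Nat.zero_mod, if_pos rfl] at hc
    apply hne
    rw [hxdef, Option.some.injEq, Prod.mk.injEq]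
    exact ⟨by apply Fin.ext; simpa using hlσ, hc.2⟩
  · -- l < σ : descend to level 0, then climb on a good parity
    have hfree : ∀ (m : ℕ) (_ : m ≤ l) (v : V),
        (some (⟨m, by omega⟩, v) : Option (Fin (t+1) × V)) ≠ x := by
      intro m hm v hc
      rw [hxdef, Option.some.injEq, Prod.mk.injEq] at hc
      have := congrArg Fin.val hc.1
      simp at this
      omega
    have final : ∀ (q r : V), G.Adj q r → ((σ : ℕ) % 2 = 0 → q ≠ i) →
        ((σ : ℕ) % 2 = 1 → r ≠ i) →
        ∀ (hq : (some (⟨0, by omega⟩, q) : Option (Fin (t+1) × V)) ≠ x),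
        ((genMyc G t).induce {u | u ≠ x}).Reachable ⟨some (⟨0, by omega⟩, q), hq⟩ ⟨none, hxnone⟩ := by
      intro q r hqr hq0 hq1 hq
      refine genMyc_climb x hxnone t 0 (by omega) q r hqr ?_ hq
      intro m hm hc
      rw [hxdef, Option.some.injEq, Prod.mk.injEq] at hc
      have hval : 0 + m = (σ : ℕ) := by
        have := congrArg Fin.val hc.1
        simpa using this
      have hmσ : m = (σ : ℕ) := by omega
      rcases Nat.mod_two_eq_zero_or_one (σ : ℕ) with hp | hp
      · have : m % 2 = 0 := by omega
        rw [if_pos this] at hc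
        exact hq0 hp hc.2
      · have : ¬ (m % 2 = 0) := by omega
        rw [if_neg this] at hc
        exact hq1 hp hc.2
    have e00 : ((genMyc G t).induce {u | u ≠ x}).Adj
        ⟨some (⟨0, by omega⟩, j), hfree 0 (by omega) j⟩
        ⟨some (⟨0, by omega⟩, k), hfree 0 (by omega) k⟩ := by
      show (genMyc G t).Adj _ _
      exact genMyc_adj_zero hjk _ _ rfl rfl
    have hdesc := genMyc_desc x l (by omega) j k hjk hfree
    -- choose the climbing pair
    have hrest : ((genMyc G t).induce {u | u ≠ x}).Reachable
        ⟨some (⟨0, by omega⟩, j), hfree 0 (by omega) j⟩ ⟨none, hxnone⟩ ∨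
        ((genMyc G t).induce {u | u ≠ x}).Reachable
        ⟨some (⟨0, by omega⟩, k), hfree 0 (by omega) k⟩ ⟨none, hxnone⟩ := by
      rcases Nat.mod_two_eq_zero_or_one (σ : ℕ) with hp | hp
      · by_cases hji : j = i
        · exact Or.inr (final k j hjk.symm (fun _ hki => hjk.ne (hji.trans hki.symm))
            (fun h => absurd hp (by omega)) _)
        · exact Or.inl (final j k hjk (fun _ => hji) (fun h => absurd hp (by omega)) _)
      · by_cases hki : k = i
        · exact Or.inr (final k j hjk.symm (fun h => absurd hp (by omega))
            (fun _ hji => hjk.ne (hji.trans hki.symm)) _)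
        · exact Or.inl (final j k hjk (fun h => absurd hp (by omega)) (fun _ => hki) _)
    rcases hdesc with h | h <;> rcases hrest with h' | h'
    · exact h.trans h'
    · exact h.trans (e00.reachable.trans h')
    · exact h.trans (e00.reachable.symm.trans h')
    · exact h.trans h'

lemma genMyc_isolated_vertex (lf : Fin (t+1)) (jf : V) (hno : ∀ k, ¬ G.Adj jf k)
    (hlt : (lf : ℕ) ≠ t) : ∀ u, ¬ (genMyc G t).Adj (some (lf, jf)) u := by
  rintro (_ | ⟨s', m⟩) hadj
  · exact hlt (genMyc_adj_some_none hadj)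
  · exact hno m (genMyc_adj_some_some hadj)

lemma reachable_eq_of_isolated {W : Type*} {H : SimpleGraph W} {u b : W}
    (h : ∀ v, ¬ H.Adj u v) (hr : H.Reachable u b) : u = b := by
  obtain ⟨w⟩ := hr
  cases w with
  | nil => rfl
  | cons ha _ => exact absurd ha (h _)

lemma genMyc_good_reach (σ : Fin (t+1)) (i : V) (u : Option (Fin (t+1) × V))
    (hu : u ≠ some (σ, i))
    (hgood : ¬ ∃ (lf : Fin (t+1)) (jf : V),
        u = some (lf, jf) ∧ (∀ k, ¬ G.Adj jf k) ∧ (lf : ℕ) ≠ t) :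
    ((genMyc G t).induce {u | u ≠ some (σ, i)}).Reachable ⟨u, hu⟩ ⟨none, by simp⟩ := by
  rcases u with _ | ⟨lf, jf⟩
  · exact Reachable.refl _
  by_cases hlt : (lf : ℕ) = t
  · apply Adj.reachable
    show (genMyc G t).Adj _ _
    exact genMyc_adj_top lf hlt jf
  · have hk : ∃ k, G.Adj jf k := by
      by_contra hno
      push_neg at hno
      exact hgood ⟨lf, jf, rfl, hno, hlt⟩
    obtain ⟨k, hk⟩ := hk
    exact genMyc_reach_root σ i jf k hk lf.val (by omega) hu

lemma genMyc_del_reach (σ : Fin (t+1)) (i : V) {a b : Option (Fin (t+1) × V)}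
    (ha : a ≠ some (σ, i)) (hb : b ≠ some (σ, i)) (hr : (genMyc G t).Reachable a b) :
    ((genMyc G t).induce {u | u ≠ some (σ, i)}).Reachable ⟨a, ha⟩ ⟨b, hb⟩ := by
  by_cases hba : ∃ (lf : Fin (t+1)) (jf : V),
      a = some (lf, jf) ∧ (∀ k, ¬ G.Adj jf k) ∧ (lf : ℕ) ≠ t
  · obtain ⟨lf, jf, rfl, hno, hlt⟩ := hba
    obtain rfl : some (lf, jf) = b :=
      reachable_eq_of_isolated (genMyc_isolated_vertex lf jf hno hlt) hr
    exact Reachable.refl _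
  · by_cases hbb : ∃ (lf : Fin (t+1)) (jf : V),
        b = some (lf, jf) ∧ (∀ k, ¬ G.Adj jf k) ∧ (lf : ℕ) ≠ t
    · obtain ⟨lf, jf, rfl, hno, hlt⟩ := hbb
      obtain rfl : some (lf, jf) = a :=
        reachable_eq_of_isolated (genMyc_isolated_vertex lf jf hno hlt) hr.symm
      exact Reachable.refl _
    · exact (genMyc_good_reach σ i a ha hba).trans (genMyc_good_reach σ i b hb hbb).symm

end Aux

theorem stmt_5 {V : Type*} [Fintype V] [Nonempty V] (G : SimpleGraph V)
    (hG : ¬ G.Connected) (t : ℕ) (ht : 1 ≤ t) :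
    IsCutVertex (genMyc G t) none ∧
    ∀ x : Option (Fin (t + 1) × V), IsCutVertex (genMyc G t) x → x = none := by
  classical
  obtain ⟨v₀⟩ := ‹Nonempty V›
  have htlt : t < t + 1 := by omega
  constructor
  · -- `none` is a cut vertex
    obtain ⟨i, j, hij⟩ : ∃ i j : V, ¬ G.Reachable i j := by
      by_contra h
      push_neg at h
      exact hG (by rw [connected_iff]; exact ⟨fun u v => h u v, ‹_›⟩)
    let f : {u : Option (Fin (t+1) × V) // u ∈ {u | u ≠ (none : Option (Fin (t+1) × V))}} → V :=
      fun u => ((u.1).getD (⟨0, by omega⟩, v₀)).2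
    have hφ : ∀ a b, ((genMyc G t).induce {u | u ≠ none}).Adj a b → G.Adj (f a) (f b) := by
      rintro ⟨a, ha⟩ ⟨b, hb⟩ hab
      rcases a with _ | ⟨sa, pa⟩
      · exact absurd rfl ha
      rcases b with _ | ⟨sb, pb⟩
      · exact absurd rfl hb
      exact genMyc_adj_some_some hab
    let φ : ((genMyc G t).induce {u | u ≠ none}) →g G := ⟨f, fun {a b} h => hφ a b h⟩
    let g : ((genMyc G t).induce {u | u ≠ none}).ConnectedComponent →
        (genMyc G t).ConnectedComponent :=
      ConnectedComponent.map (SimpleGraph.Embedding.induce _).toHom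
    have hgd : ∀ (u : {u : Option (Fin (t+1) × V) // u ∈ {u | u ≠ none}}),
        g (((genMyc G t).induce {u | u ≠ none}).connectedComponentMk u) =
          (genMyc G t).connectedComponentMk u.1 := fun u => rfl
    have hsurj : Function.Surjective g := by
      intro c
      induction c using SimpleGraph.ConnectedComponent.ind with
      | _ v =>
        rcases v with _ | p
        · refine ⟨((genMyc G t).induce {u | u ≠ none}).connectedComponentMk
            ⟨some (⟨t, htlt⟩, v₀), by simp⟩, ?_⟩
          rw [hgd]
          exact ConnectedComponent.eq.mpr (genMyc_adj_top ⟨t, htlt⟩ rfl v₀).reachable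
        · exact ⟨((genMyc G t).induce {u | u ≠ none}).connectedComponentMk
            ⟨some p, by simp⟩, rfl⟩
    have hmemi : (some (⟨t, htlt⟩, i) : Option (Fin (t+1) × V)) ∈ {u | u ≠ none} := by simp
    have hmemj : (some (⟨t, htlt⟩, j) : Option (Fin (t+1) × V)) ∈ {u | u ≠ none} := by simp
    have h12 : g (((genMyc G t).induce {u | u ≠ none}).connectedComponentMk
          ⟨some (⟨t, htlt⟩, i), hmemi⟩) =
        g (((genMyc G t).induce {u | u ≠ none}).connectedComponentMk
          ⟨some (⟨t, htlt⟩, j), hmemj⟩) := by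
      rw [hgd, hgd]
      exact ConnectedComponent.eq.mpr
        ((genMyc_adj_top _ rfl i).reachable.trans (genMyc_adj_top _ rfl j).reachable.symm)
    have hne12 : (((genMyc G t).induce {u | u ≠ none}).connectedComponentMk
          ⟨some (⟨t, htlt⟩, i), hmemi⟩) ≠
        (((genMyc G t).induce {u | u ≠ none}).connectedComponentMk
          ⟨some (⟨t, htlt⟩, j), hmemj⟩) := by
      intro h
      have hreach := ConnectedComponent.eq.mp h
      exact hij (hreach.map φ)
    have hle : Nat.card (genMyc G t).ConnectedComponent ≤
        Nat.card ((genMyc G t).induce {u | u ≠ none}).ConnectedComponent :=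
      Nat.card_le_card_of_surjective g hsurj
    have hneq : Nat.card (genMyc G t).ConnectedComponent ≠
        Nat.card ((genMyc G t).induce {u | u ≠ none}).ConnectedComponent := by
      intro he
      have hbij : Function.Bijective g :=
        (Nat.bijective_iff_surjective_and_card g).mpr ⟨hsurj, he.symm⟩
      exact hne12 (hbij.injective h12)
    exact lt_of_le_of_ne hle hneq
  · -- no other vertex is a cut vertex
    rintro (_ | ⟨σ, i⟩) hx
    · rfl
    exfalso
    let g : ((genMyc G t).induce {u | u ≠ some (σ, i)}).ConnectedComponent →
        (genMyc G t).ConnectedComponent :=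
      ConnectedComponent.map (SimpleGraph.Embedding.induce _).toHom
    have hinj : Function.Injective g := by
      intro c₁ c₂ h
      induction c₁ using SimpleGraph.ConnectedComponent.ind with
      | _ u =>
      induction c₂ using SimpleGraph.ConnectedComponent.ind with
      | _ v =>
        have hr : (genMyc G t).Reachable u.1 v.1 := ConnectedComponent.eq.mp h
        exact ConnectedComponent.eq.mpr (genMyc_del_reach σ i u.2 v.2 hr)
    have hle : Nat.card ((genMyc G t).induce {u | u ≠ some (σ, i)}).ConnectedComponent ≤
        Nat.card (genMyc G t).ConnectedComponent :=
      Nat.card_le_card_of_injective g hinj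
    have hx' : Nat.card (genMyc G t).ConnectedComponent <
        Nat.card ((genMyc G t).induce {u | u ≠ some (σ, i)}).ConnectedComponent := hx
    omega
end

section
/- Let G be a graph with n ≥ 3 vertices and t > 1. Then no automorphism of μ_t(G) maps the root w to any vertex u_i^s with 0 ≤ s ≤ t−1 (i.e., any vertex below the top level). -/
open SimpleGraph

/-!
For each neighbour `u_j^t` of the root `w`, the vertex `u_j^{t-2}` is a non-neighbour of `w`
adjacent to every vertex of `N(u_j^t) \ {w}`, and this property of `w` is preserved by
automorphisms. A vertex `u_i^s` with `s < t` lacks it as soon as some neighbour `j` of `i` has a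
neighbour `l ≠ i`. Otherwise every neighbour of `i` is a leaf of `G`, and degrees decide: a
vertex `u_k^r` with `k` of degree at most one has degree at most two. Since `deg w = n ≥ 3`, the
vertex `i` has two neighbours, so `deg u_i^t ≥ 3`; but an automorphism sending `w` to `u_i^s`
sends `u_i^t` to a neighbour `u_k^r` of `u_i^s`, and then `k ~ i` is a leaf.
-/

namespace SimpleGraph

variable {W W' : Type*} {H : SimpleGraph W} {H' : SimpleGraph W'}

theorem Iso.encard_neighborSet (φ : H ≃g H') (v : W) :
    (H'.neighborSet (φ v)).encard = (H.neighborSet v).encard := by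
  rw [← φ.image_neighborSet, φ.injective.encard_image]

def HasDominatedNeighbors (H : SimpleGraph W) (v : W) : Prop :=
  ∀ a, H.Adj v a → ∃ b, ¬ H.Adj v b ∧ ∀ c, H.Adj a c → c ≠ v → H.Adj b c

theorem HasDominatedNeighbors.map {v : W} (h : H.HasDominatedNeighbors v) (φ : H ≃g H') :
    H'.HasDominatedNeighbors (φ v) := by
  intro a ha
  obtain ⟨b, hvb, hcov⟩ := h (φ.symm a) (by simpa using φ.symm.map_adj_iff.mpr ha)
  refine ⟨φ b, by rwa [φ.map_adj_iff], fun c hac hcv => ?_⟩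
  have hc : φ.symm c ≠ v := by rintro rfl; simp at hcv
  simpa using φ.map_adj_iff.mpr (hcov _ (by simpa using φ.symm.map_adj_iff.mpr hac) hc)

end SimpleGraph

section genMyc

variable {V : Type*} {G : SimpleGraph V} {t : ℕ}

theorem genMyc_adj_some_some_s7 {s r : Fin (t + 1)} {i k : V} :
    (genMyc G t).Adj (some (s, i)) (some (r, k)) ↔
      G.Adj i k ∧
        ((s : ℕ) = 0 ∧ (r : ℕ) = 0 ∨ (r : ℕ) = s + 1 ∨ (s : ℕ) = r + 1) := by
  simp only [genMyc, fromRel_adj, ne_eq, Option.some.injEq, Prod.mk.injEq]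
  grind [G.adj_symm, G.ne_of_adj]

theorem genMyc_adj_none_some {s : Fin (t + 1)} {i : V} :
    (genMyc G t).Adj none (some (s, i)) ↔ (s : ℕ) = t := by
  simp [genMyc, fromRel_adj]

theorem exists_eq_some_of_genMyc_adj {s : Fin (t + 1)} {i : V} {y : Option (Fin (t + 1) × V)}
    (hs : (s : ℕ) < t) (h : (genMyc G t).Adj (some (s, i)) y) :
    ∃ r k, y = some (r, k) ∧ G.Adj i k := by
  rcases y with _ | ⟨r, k⟩
  · rw [adj_comm, genMyc_adj_none_some] at h
    omega
  · exact ⟨r, k, rfl, (genMyc_adj_some_some_s7.mp h).1⟩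

theorem encard_neighborSet_genMyc_le_two (s : Fin (t + 1)) {i : V}
    (hi : (G.neighborSet i).Subsingleton) :
    ((genMyc G t).neighborSet (some (s, i))).encard ≤ 2 := by
  -- a neighbour of `u_i^s` is determined by whether it lies above level `s`
  let above : Option (Fin (t + 1) × V) → Bool := fun y => y.elim true fun p => (s : ℕ) < p.1
  have hinj : Set.InjOn above ((genMyc G t).neighborSet (some (s, i))) := by
    rintro (_ | ⟨r, k⟩) ha (_ | ⟨r', k'⟩) hb hab
    · rfl
    · rw [mem_neighborSet, adj_comm, genMyc_adj_none_some] at ha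
      simp [above] at hab
      omega
    · rw [mem_neighborSet, adj_comm, genMyc_adj_none_some] at hb
      simp [above] at hab
      omega
    · rw [mem_neighborSet, genMyc_adj_some_some_s7] at ha hb
      have hk : k = k' := hi ha.1 hb.1
      simp only [above, Option.elim, decide_eq_decide] at hab
      simp only [hk, Option.some.injEq, Prod.mk.injEq, Fin.ext_iff, and_true]
      omega
  calc _ ≤ (Set.univ : Set Bool).encard :=
        Set.encard_le_encard_of_injOn (Set.mapsTo_univ _ _) hinj
    _ = 2 := by rw [Set.encard_univ, ENat.card_eq_coe_fintype_card, Fintype.card_bool]; rfl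

theorem card_le_encard_neighborSet_genMyc_none [Fintype V] :
    (Fintype.card V : ℕ∞) ≤ ((genMyc G t).neighborSet none).encard := by
  have hinj : Function.Injective fun v : V => (some (Fin.last t, v) : Option (Fin (t + 1) × V)) :=
    fun v w h => by simpa using h
  calc (Fintype.card V : ℕ∞) = (Set.univ : Set V).encard := by
        rw [Set.encard_univ, ENat.card_eq_coe_fintype_card]
    _ ≤ _ := Set.encard_le_encard_of_injOn (fun v _ => by simp [genMyc_adj_none_some]) hinj.injOn

theorem three_le_encard_neighborSet_genMyc_last (ht : 1 ≤ t) {i j₁ j₂ : V}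
    (h₁ : G.Adj i j₁) (h₂ : G.Adj i j₂) (hj : j₁ ≠ j₂) :
    3 ≤ ((genMyc G t).neighborSet (some (Fin.last t, i))).encard := by
  let below : V → Option (Fin (t + 1) × V) := fun j => some (⟨t - 1, by omega⟩, j)
  have hbelow : ∀ j, G.Adj i j → (genMyc G t).Adj (some (Fin.last t, i)) (below j) := by
    intro j hij
    simp only [below, genMyc_adj_some_some_s7, Fin.val_last]
    exact ⟨hij, by omega⟩
  calc (3 : ℕ∞) = ({none, below j₁, below j₂} : Set _).encard :=
        (Set.encard_eq_three.mpr ⟨_, _, _, by simp [below], by simp [below],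
          by simpa [below] using hj, rfl⟩).symm
    _ ≤ _ := Set.encard_le_encard <| by
        rintro _ (rfl | rfl | rfl)
        · simp [adj_comm, genMyc_adj_none_some]
        · exact hbelow j₁ h₁
        · exact hbelow j₂ h₂

theorem genMyc_hasDominatedNeighbors_none (ht : 2 ≤ t) :
    (genMyc G t).HasDominatedNeighbors none := by
  rintro (_ | ⟨s, j⟩) ha
  · exact absurd ha (genMyc G t).irrefl
  rw [genMyc_adj_none_some] at ha
  refine ⟨some (⟨t - 2, by omega⟩, j), by simp [genMyc_adj_none_some]; omega, ?_⟩
  rintro (_ | ⟨r, l⟩) hc hcw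
  · exact absurd rfl hcw
  rw [genMyc_adj_some_some_s7] at hc ⊢
  exact ⟨hc.1, by simp only; omega⟩

theorem genMyc_not_hasDominatedNeighbors {s : Fin (t + 1)} {i j l : V} (hs : (s : ℕ) < t)
    (hij : G.Adj i j) (hjl : G.Adj j l) (hli : l ≠ i) :
    ¬ (genMyc G t).HasDominatedNeighbors (some (s, i)) := by
  intro hdom
  obtain ⟨s', s'', hxa, hac, hs''⟩ : ∃ s' s'' : Fin (t + 1),
      (genMyc G t).Adj (some (s, i)) (some (s', j)) ∧
        (genMyc G t).Adj (some (s', j)) (some (s'', i)) ∧ s'' ≠ s := by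
    simp only [genMyc_adj_some_some_s7, hij, hij.symm, true_and, ne_eq, Fin.ext_iff]
    rcases Nat.eq_zero_or_pos s with h | h
    · exact ⟨⟨0, by omega⟩, ⟨1, by omega⟩, by simp [h]⟩
    · exact ⟨⟨s - 1, by omega⟩, ⟨s - 2, by omega⟩, by simp only; omega⟩
  have hal : (genMyc G t).Adj (some (s', j)) (some (s, l)) := by
    rw [genMyc_adj_some_some_s7] at hxa ⊢
    exact ⟨hjl, by omega⟩
  obtain ⟨b, hxb, hcov⟩ := hdom _ hxa
  -- `b` is adjacent to `u_i^{s''}`, so `b = u_k^r` with `k ~ i`,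
  -- and to `u_l^s`, so `r` is next to `s`; hence `b ~ u_i^s`.
  have hbi := hcov _ hac (by simpa using hs'')
  have hbl := hcov _ hal (by simpa using hli)
  obtain ⟨r, k, rfl, -⟩ := exists_eq_some_of_genMyc_adj hs hbl.symm
  rw [genMyc_adj_some_some_s7] at hbi hbl hxb
  exact hxb ⟨hbi.1.symm, by omega⟩

end genMyc

theorem stmt_7 {V : Type*} [Fintype V] (G : SimpleGraph V)
    (hn : 3 ≤ Fintype.card V) (t : ℕ) (ht : 1 < t) :
    ∀ φ : genMyc G t ≃g genMyc G t, ∀ (s : Fin (t + 1)) (i : V),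
      (s : ℕ) < t → φ none ≠ some (s, i) := by
  intro φ s i hs hφ
  by_cases hleaves : ∀ j, G.Adj i j → (G.neighborSet j).Subsingleton
  · have hi : (G.neighborSet i).Nontrivial := by
      rw [← Set.not_subsingleton_iff]
      intro hi
      have h₂ := encard_neighborSet_genMyc_le_two (t := t) s hi
      rw [← hφ, φ.encard_neighborSet] at h₂
      have h₃ : (3 : ℕ∞) ≤ ((genMyc G t).neighborSet none).encard :=
        (Nat.cast_le.mpr hn).trans card_le_encard_neighborSet_genMyc_none
      exact absurd (h₃.trans h₂) (by decide)
    obtain ⟨j₁, h₁, j₂, h₂, hj⟩ := hi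
    have hq : (genMyc G t).Adj (φ none) (φ (some (Fin.last t, i))) := by
      rw [φ.map_adj_iff, genMyc_adj_none_some, Fin.val_last]
    rw [hφ] at hq
    obtain ⟨r, k, hqk, hik⟩ := exists_eq_some_of_genMyc_adj hs hq
    have hdeg := encard_neighborSet_genMyc_le_two r (hleaves k hik)
    rw [← hqk, φ.encard_neighborSet] at hdeg
    have h₃ := three_le_encard_neighborSet_genMyc_last ht.le h₁ h₂ hj
    exact absurd (h₃.trans hdeg) (by decide)
  · push Not at hleaves
    obtain ⟨j, hij, hj⟩ := hleaves
    obtain ⟨l, hjl, hli⟩ := hj.exists_ne i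
    exact genMyc_not_hasDominatedNeighbors hs hij hjl hli
      (hφ ▸ (genMyc_hasDominatedNeighbors_none ht).map φ)
end
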